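/- arXiv:1901.06407 — 2 statements merged into one kernel-verified Lean document; each statement's English description precedes it below -/
import Mathlib

section
/- For distinct m, k ∈ {1, ..., n+1} with m ≠ k, no state of the model M_k satisfies the formula A_m; in particular the formulas A_1, ..., A_{n+1} are pairwise 'exclusive' over the family of models {M_1, ..., M_{n+1}}. -/
/-- Formulas of basic modal logic: propositional variables, ⊥, →, and [b]. -/
inductive MF : Type where
  | var : ℕ → MF
  | bot : MF
  | imp : MF → MF → MF
  | box : MF → MF

def MF.neg (φ : MF) : MF := .imp φ .bot
def MF.top : MF := .imp .bot .bot
def MF.and (φ ψ : MF) : MF := .neg (.imp φ (.neg ψ))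
def MF.dia (φ : MF) : MF := .neg (.box (.neg φ))

/-- ⟨b⟩^k φ -/
def MF.diaN : ℕ → MF → MF
  | 0, φ => φ
  | k + 1, φ => .dia (MF.diaN k φ)

/-- Standard Kripke satisfaction over a model (S, R, V). -/
def sat {S : Type} (R : S → S → Prop) (V : ℕ → S → Prop) : S → MF → Prop
  | s, .var p => V p s
  | _, .bot => False
  | s, .imp φ ψ => sat R V s φ → sat R V s ψ
  | s, .box φ => ∀ t, R s t → sat R V t φ
/-- States of the model M_m: root r, reflexive state t, and s_1, ..., s_m
(here `St.s i` for `i : Fin m` represents the paper's s_{i+1}). -/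
inductive St (m : ℕ) : Type where
  | r : St m
  | t : St m
  | s : Fin m → St m

/-- The base relation {(r,t), (t,t), (r,s_1)} ∪ {(s_i, s_{i+1}) : 1 ≤ i ≤ m-1}. -/
def baseRel (m : ℕ) : St m → St m → Prop := fun x y =>
  (x = .r ∧ y = .t) ∨ (x = .t ∧ y = .t) ∨
  (∃ h : 0 < m, x = .r ∧ y = .s ⟨0, h⟩) ∨
  (∃ i j : Fin m, x = .s i ∧ y = .s j ∧ (j : ℕ) = (i : ℕ) + 1)

/-- R_b: the transitive closure of the base relation. -/
def Rb (m : ℕ) : St m → St m → Prop := Relation.TransGen (baseRel m)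

/-- The valuation of M_m: all propositional variables are false everywhere. -/
def Vempty (m : ℕ) : ℕ → St m → Prop := fun _ _ => False

/-- A_m = ⟨b⟩^m [b]⊥ ∧ ¬⟨b⟩^{m+1} [b]⊥ ∧ ⟨b⟩(⟨b⟩⊤ ∧ [b]⟨b⟩⊤). -/
def Aform (m : ℕ) : MF :=
  .and (MF.diaN m (.box .bot))
    (.and (.neg (MF.diaN (m + 1) (.box .bot)))
      (.dia (.and (.dia .top) (.box (.dia .top)))))

/-- B_m = ⟨b⟩A_m. -/
def Bform (m : ℕ) : MF := .dia (Aform m)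

/-!
In `M_k` the transitive closure is explicit: `t` sees only itself, `r` sees every other state, and
`s_i` sees `s_j` exactly when `i < j`. So `r` satisfies `⟨b⟩^j [b]⊥` exactly for `1 ≤ j ≤ k`, and
the first two conjuncts of `A_m` force `m = k` there; `t` never reaches a dead end; and every
successor of `s_i` that has a successor still sees the dead end `s_k`, so `s_i` fails the last
conjunct.
-/

section Kripke

variable {S : Type} {R : S → S → Prop} {V : ℕ → S → Prop} {x : S} {φ ψ : MF}

theorem sat_neg : sat R V x φ.neg ↔ ¬ sat R V x φ := Iff.rfl

theorem sat_and : sat R V x (φ.and ψ) ↔ sat R V x φ ∧ sat R V x ψ := by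
  simp only [MF.and, sat_neg, sat, Classical.not_imp, not_not]

theorem sat_dia : sat R V x φ.dia ↔ ∃ y, R x y ∧ sat R V y φ := by
  simp only [MF.dia, sat_neg, sat, not_forall, not_not, exists_prop]

theorem sat_box_bot : sat R V x (.box .bot) ↔ ∀ y, ¬ R x y := Iff.rfl

end Kripke

namespace St

variable {k : ℕ}

def Reach : St k → St k → Prop
  | .r, .r => False
  | .r, _ => True
  | .t, y => y = .t
  | .s _, .r | .s _, .t => False
  | .s i, .s j => i < j

theorem reach_trans {x y z : St k} (hxy : Reach x y) (hyz : Reach y z) : Reach x z := by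
  cases x <;> cases y <;> cases z <;> simp_all only [Reach, reduceCtorEq]
  exact hxy.trans hyz

theorem reach_of_baseRel {x y : St k} (h : baseRel k x y) : Reach x y := by
  rcases h with ⟨rfl, rfl⟩ | ⟨rfl, rfl⟩ | ⟨_, rfl, rfl⟩ | ⟨i, j, rfl, rfl, hij⟩ <;>
    simp [Reach, Fin.lt_def, *]

theorem rb_s_s {i j : Fin k} (hij : i < j) : Rb k (.s i) (.s j) := by
  obtain ⟨i, hi⟩ := i
  obtain ⟨j, hj⟩ := j
  rw [Fin.mk_lt_mk] at hij
  induction j, hij using Nat.le_induction with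
  | base => exact .single (.inr (.inr (.inr ⟨_, _, rfl, rfl, rfl⟩)))
  | succ j hij ih => exact (ih (by omega)).tail (.inr (.inr (.inr ⟨_, _, rfl, rfl, rfl⟩)))

theorem rb_r_s (j : Fin k) : Rb k .r (.s j) := by
  have h₀ : Rb k .r (.s ⟨0, j.pos⟩) := .single (.inr (.inr (.inl ⟨j.pos, rfl, rfl⟩)))
  rcases Nat.eq_zero_or_pos j with hj | hj
  · rwa [show j = ⟨0, j.pos⟩ from Fin.ext hj]
  · exact h₀.trans (rb_s_s (Fin.mk_lt_of_lt_val hj))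

theorem rb_iff_reach {x y : St k} : Rb k x y ↔ Reach x y := by
  constructor
  · intro h
    induction h using Relation.TransGen.trans_induction_on with
    | single h => exact reach_of_baseRel h
    | trans _ _ h₁ h₂ => exact reach_trans h₁ h₂
  · intro h
    cases x <;> cases y <;> simp only [Reach, reduceCtorEq] at h
    · exact .single (.inl ⟨rfl, rfl⟩)
    · exact rb_r_s _
    · exact .single (.inr (.inl ⟨rfl, rfl⟩))
    · exact rb_s_s h

theorem not_sat_t_diaN_box_bot (j : ℕ) : ¬ sat (Rb k) (Vempty k) .t (MF.diaN j (.box .bot)) := by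
  induction j with
  | zero => exact fun h => h .t (rb_iff_reach.mpr rfl)
  | succ j ih => simpa only [MF.diaN, sat_dia, rb_iff_reach, Reach, exists_eq_left] using ih

theorem add_lt_of_sat_s_diaN_box_bot {i : Fin k} {j : ℕ}
    (h : sat (Rb k) (Vempty k) (.s i) (MF.diaN j (.box .bot))) : i + j < k := by
  induction j generalizing i with
  | zero => exact i.isLt
  | succ j ih =>
    obtain ⟨y, hy, hy'⟩ := sat_dia.mp h
    rw [rb_iff_reach] at hy
    cases y <;> simp only [Reach] at hy
    have := ih hy'
    omega

theorem sat_s_diaN_box_bot {i : Fin k} {j : ℕ} (h : i + j + 1 = k) :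
    sat (Rb k) (Vempty k) (.s i) (MF.diaN j (.box .bot)) := by
  induction j generalizing i with
  | zero =>
    intro y hy
    rw [rb_iff_reach] at hy
    cases y <;> simp only [Reach] at hy
    omega
  | succ j ih =>
    exact sat_dia.mpr ⟨.s ⟨i + 1, by omega⟩, rb_s_s (Fin.lt_def.mpr (by simp)), ih (by simp; omega)⟩

theorem sat_r_diaN_box_bot_iff {j : ℕ} :
    sat (Rb k) (Vempty k) .r (MF.diaN j (.box .bot)) ↔ 1 ≤ j ∧ j ≤ k := by
  cases j with
  | zero => simpa [MF.diaN, sat_box_bot] using ⟨.t, rb_iff_reach.mpr trivial⟩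
  | succ j =>
    rw [MF.diaN, sat_dia]
    constructor
    · rintro ⟨y, hy, h⟩
      cases y with
      | r => exact (rb_iff_reach.mp hy).elim
      | t => exact (not_sat_t_diaN_box_bot j h).elim
      | s i => have := add_lt_of_sat_s_diaN_box_bot h; omega
    · intro h
      exact ⟨.s ⟨k - 1 - j, by omega⟩, rb_r_s _, sat_s_diaN_box_bot (by simp; omega)⟩

theorem not_sat_s_dia_and_dia_top_box_dia_top (i : Fin k) :
    ¬ sat (Rb k) (Vempty k) (.s i) (.dia (.and (.dia .top) (.box (.dia .top)))) := by
  simp only [sat_dia, sat_and]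
  rintro ⟨y, hy, ⟨z, hz, -⟩, hbox⟩
  rw [rb_iff_reach] at hy hz
  cases y <;> cases z <;> simp only [Reach] at hy hz
  obtain ⟨w, hw, -⟩ :=
    sat_dia.mp (hbox (.s ⟨k - 1, by omega⟩) (rb_s_s (Fin.lt_def.mpr (by simp; omega))))
  rw [rb_iff_reach] at hw
  cases w <;> simp only [Reach, Fin.lt_def] at hw
  omega

end St

theorem stmt4_general (m k : ℕ) (hmk : m ≠ k) (x : St k) :
    ¬ sat (Rb k) (Vempty k) x (Aform m) := by
  intro h
  simp only [Aform, sat_and, sat_neg] at h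
  obtain ⟨hdepth, hnot_deeper, hserial⟩ := h
  cases x with
  | r =>
    rw [St.sat_r_diaN_box_bot_iff] at hdepth hnot_deeper
    omega
  | t => exact St.not_sat_t_diaN_box_bot m hdepth
  | s i => exact St.not_sat_s_dia_and_dia_top_box_dia_top i hserial

/-- For distinct m, k ∈ {1, ..., n+1}, no state of M_k satisfies A_m. -/
theorem stmt4 (n m k : ℕ) (hm1 : 1 ≤ m) (hm2 : m ≤ n + 1)
    (hk1 : 1 ≤ k) (hk2 : k ≤ n + 1) (hmk : m ≠ k) (x : St k) :
    ¬ sat (Rb k) (Vempty k) x (Aform m) :=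
  stmt4_general m k hmk x
end

section
/- Let M be a Kripke model, s_0 a state satisfying Θ ∧ φ' where p_{n+1} is universally true in M, and let M'' be the model obtained from M by disjointly attaching the models M_1, ..., M_{n+1} and adding an R_b-edge from each state x of M to the root r_m of M_m exactly when M, x ⊨ p_m (for 1 ≤ m ≤ n+1). Then for every state x of M and every i ∈ {1, ..., n+1}: M'', x ⊨ ⟨b⟩A_i if and only if M, x ⊨ p_i. -/
/-- The relativized translation: ([b]φ)' = [b](p → φ'). -/
def relT (p : ℕ) : MF → MF
  | .var q => .var q
  | .bot => .bot
  | .imp a b => .imp (relT p a) (relT p b)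
  | .box a => .box (.imp (.var p) (relT p a))

/-- The variable q occurs in a formula. -/
def occurs (q : ℕ) : MF → Prop
  | .var r => r = q
  | .bot => False
  | .imp a b => occurs q a ∨ occurs q b
  | .box a => occurs q a

/-- The smallest subset of S containing s0 and closed under:
x ∈ S', x R y, y ⊨ p implies y ∈ S'. -/
inductive Gen {S : Type} (R : S → S → Prop) (V : ℕ → S → Prop) (p : ℕ) (s0 : S) : S → Prop
  | base : Gen R V p s0 s0
  | step {x y : S} : Gen R V p s0 x → R x y → V p y → Gen R V p s0 y

/-- Modal formulas with the iteration modality [b*]. -/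
inductive MFs : Type where
  | var : ℕ → MFs
  | bot : MFs
  | imp : MFs → MFs → MFs
  | box : MFs → MFs
  | boxS : MFs → MFs

def MFs.neg (φ : MFs) : MFs := .imp φ .bot
def MFs.top : MFs := .imp .bot .bot
def MFs.and (φ ψ : MFs) : MFs := .neg (.imp φ (.neg ψ))
def MFs.dia (φ : MFs) : MFs := .neg (.box (.neg φ))

/-- Satisfaction with [b*] interpreted via the reflexive-transitive closure. -/
def sats {S : Type} (R : S → S → Prop) (V : ℕ → S → Prop) : S → MFs → Prop
  | s, .var p => V p s
  | _, .bot => False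
  | s, .imp φ ψ => sats R V s φ → sats R V s ψ
  | s, .box φ => ∀ t, R s t → sats R V t φ
  | s, .boxS φ => ∀ t, Relation.ReflTransGen R s t → sats R V t φ

/-- Embedding of basic modal formulas into the language with [b*]. -/
def embed : MF → MFs
  | .var q => .var q
  | .bot => .bot
  | .imp a b => .imp (embed a) (embed b)
  | .box a => .box (embed a)

/-- Θ = p_{n+1} ∧ [b*](⟨b⟩p_{n+1} → p_{n+1}); the fresh variable p_{n+1}
is represented by `MFs.var n` (variables p_1, ..., p_n are var 0, ..., var (n-1)). -/
def Theta (n : ℕ) : MFs :=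
  MFs.and (.var n) (.boxS (.imp (MFs.dia (.var n)) (.var n)))

/-- All variables of φ are among p_1, ..., p_n (i.e. var 0, ..., var (n-1)). -/
def varsLt (n : ℕ) (φ : MF) : Prop := ∀ q : ℕ, occurs q φ → q < n

/-- States of the composite model M'': the original states S together with
the disjointly attached models M_1, ..., M_{n+1} (the member `⟨m, a⟩`
with `m : Fin (n+1)` is state a of the model M_{m+1}). -/
def CS (n : ℕ) (S : Type) : Type := S ⊕ (Σ m : Fin (n + 1), St ((m : ℕ) + 1))

/-- The accessibility relation of M'': R inside M, R_b inside each attached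
M_m, plus an edge from x ∈ M to the root r_m of M_m exactly when M, x ⊨ p_m
(variable p_m is `var (m-1)`, i.e. `V m x` for `m : Fin (n+1)`). -/
def CR (n : ℕ) {S : Type} (R : S → S → Prop) (V : ℕ → S → Prop) :
    CS n S → CS n S → Prop
  | .inl x, .inl y => R x y
  | .inl x, .inr ⟨m, a⟩ => a = St.r ∧ V m x
  | .inr _, .inl _ => False
  | .inr ⟨m, a⟩, .inr ⟨m', b⟩ => ∃ h : m = m', Rb ((m' : ℕ) + 1) (h ▸ a) b

/-- The valuation of M'': as in M on the original states, and all variables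
false on the attached models. -/
def CV (n : ℕ) {S : Type} (V : ℕ → S → Prop) : ℕ → CS n S → Prop
  | q, .inl x => V q x
  | _, .inr _ => False

/-!
The attached copy of M_m is a generated submodel of M'', so formulas are evaluated there as in
M_m. In M_m the only dead end is s_m, and the longest strict chain from the root to it has length
m, so the root satisfies ⟨b⟩^{j+1}[b]⊥ exactly for j < m; together with the loop at t this makes
A_i true at r_m iff i = m. A state x of M has two kinds of successors: states of M, which all see
r_{n+1} and hence satisfy ⟨b⟩^{i+1}[b]⊥ for every i ≤ n+1, so that A_i fails there; and the roots
r_m with M, x ⊨ p_m, of which only r_i satisfies A_i.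
-/

section Satisfaction

variable {S : Type} {R : S → S → Prop} {V : ℕ → S → Prop} {s : S}

lemma sat_neg_iff {φ : MF} : sat R V s φ.neg ↔ ¬ sat R V s φ := Iff.rfl

lemma sat_and_iff {φ ψ : MF} : sat R V s (φ.and ψ) ↔ sat R V s φ ∧ sat R V s ψ := by
  simp only [MF.and, MF.neg, sat]
  tauto

lemma sat_box_iff {φ : MF} : sat R V s φ.box ↔ ∀ t, R s t → sat R V t φ := Iff.rfl

lemma sat_dia_iff {φ : MF} : sat R V s φ.dia ↔ ∃ t, R s t ∧ sat R V t φ := by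
  simp only [MF.dia, sat_neg_iff, sat_box_iff, not_forall, exists_prop, not_not]

lemma sat_top : sat R V s MF.top := fun h => h

lemma sat_diaN_succ_iff {k : ℕ} {φ : MF} :
    sat R V s (MF.diaN (k + 1) φ) ↔ ∃ t, R s t ∧ sat R V t (MF.diaN k φ) :=
  sat_dia_iff

lemma sat_Aform_iff {m : ℕ} :
    sat R V s (Aform m) ↔
      sat R V s (MF.diaN m (.box .bot)) ∧ ¬ sat R V s (MF.diaN (m + 1) (.box .bot)) ∧
        ∃ u, R s u ∧ (∃ v, R u v) ∧ ∀ v, R u v → ∃ w, R v w := by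
  simp only [Aform, sat_and_iff, sat_neg_iff, sat_dia_iff, sat_box_iff, sat_top, and_true]

end Satisfaction

section AttachedModel

variable {m : ℕ}

lemma baseRel_t_iff {b : St m} : baseRel m .t b ↔ b = .t := by
  simp [baseRel]

lemma baseRel_s_iff {i : Fin m} {b : St m} :
    baseRel m (.s i) b ↔ ∃ j : Fin m, b = .s j ∧ (j : ℕ) = i + 1 := by
  simp [baseRel]

lemma baseRel_r_iff {b : St m} : baseRel m .r b ↔ b = .t ∨ ∃ h : 0 < m, b = .s ⟨0, h⟩ := by
  simp [baseRel]

lemma Rb_t_iff {b : St m} : Rb m .t b ↔ b = .t := by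
  refine ⟨fun h => ?_, fun h => .single (baseRel_t_iff.2 h)⟩
  induction h with
  | single h => exact baseRel_t_iff.1 h
  | tail _ h ih => exact baseRel_t_iff.1 (ih ▸ h)

lemma Rb_s_s {i j : Fin m} (hij : i < j) : Rb m (.s i) (.s j) := by
  obtain ⟨j, hj⟩ := j
  induction j with
  | zero => exact absurd hij (Nat.not_lt_zero _)
  | succ j ih =>
    have step : baseRel m (.s ⟨j, by omega⟩) (.s ⟨j + 1, hj⟩) := baseRel_s_iff.2 ⟨_, rfl, rfl⟩
    rcases Nat.lt_succ_iff_lt_or_eq.1 (Fin.lt_def.1 hij) with hlt | heq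
    · exact (ih (by omega) hlt).tail step
    · rw [show i = ⟨j, by omega⟩ from Fin.ext heq]
      exact .single step

lemma Rb_s_iff {i : Fin m} {b : St m} : Rb m (.s i) b ↔ ∃ j, b = .s j ∧ i < j := by
  refine ⟨fun h => ?_, fun ⟨j, hb, hij⟩ => hb ▸ Rb_s_s hij⟩
  induction h with
  | single h =>
    obtain ⟨j, rfl, hj⟩ := baseRel_s_iff.1 h
    exact ⟨j, rfl, Fin.lt_def.2 (by omega)⟩
  | tail _ h ih =>
    obtain ⟨j, rfl, hij⟩ := ih
    obtain ⟨k, rfl, hk⟩ := baseRel_s_iff.1 h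
    exact ⟨k, rfl, Fin.lt_def.2 (by rw [Fin.lt_def] at hij; omega)⟩

lemma Rb_r_iff {b : St m} : Rb m .r b ↔ b = .t ∨ ∃ j, b = .s j := by
  constructor
  · intro h
    induction h with
    | single h => exact (baseRel_r_iff.1 h).imp_right fun ⟨_, hb⟩ => ⟨_, hb⟩
    | tail _ h ih =>
      rcases ih with rfl | ⟨j, rfl⟩
      · exact .inl (baseRel_t_iff.1 h)
      · obtain ⟨k, rfl, -⟩ := baseRel_s_iff.1 h
        exact .inr ⟨k, rfl⟩
  · rintro (rfl | ⟨⟨j, hj⟩, rfl⟩)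
    · exact .single (baseRel_r_iff.2 (.inl rfl))
    · have first : Rb m .r (.s ⟨0, by omega⟩) := .single (baseRel_r_iff.2 (.inr ⟨_, rfl⟩))
      rcases Nat.eq_zero_or_pos j with rfl | hj0
      · exact first
      · exact first.trans (Rb_s_s (Fin.lt_def.2 hj0))

local notation "satM" => sat (Rb m) (Vempty m)

lemma not_satM_t_diaN_box_bot (j : ℕ) : ¬ satM .t (MF.diaN j (.box .bot)) := by
  induction j with
  | zero => exact fun h => h .t (Rb_t_iff.2 rfl)
  | succ j ih =>
    rw [sat_diaN_succ_iff]
    rintro ⟨b, hb, hsat⟩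
    exact ih (Rb_t_iff.1 hb ▸ hsat)

lemma lt_of_satM_s_diaN_box_bot {i : Fin m} {j : ℕ} (h : satM (.s i) (MF.diaN j (.box .bot))) :
    i + j < m := by
  induction j generalizing i with
  | zero => exact i.isLt
  | succ j ih =>
    obtain ⟨b, hb, hsat⟩ := sat_diaN_succ_iff.1 h
    obtain ⟨k, rfl, hik⟩ := Rb_s_iff.1 hb
    have := ih hsat
    rw [Fin.lt_def] at hik
    omega

lemma satM_s_diaN_box_bot {i : Fin m} {j : ℕ} (h : i + j + 1 = m) :
    satM (.s i) (MF.diaN j (.box .bot)) := by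
  induction j generalizing i with
  | zero =>
    intro b hb
    obtain ⟨k, -, hik⟩ := Rb_s_iff.1 hb
    rw [Fin.lt_def] at hik
    omega
  | succ j ih =>
    exact sat_diaN_succ_iff.2 ⟨.s ⟨i + 1, by omega⟩, Rb_s_s (Fin.lt_def.2 (by simp)),
      ih (by simp only; omega)⟩

lemma satM_r_diaN_succ_box_bot_iff {j : ℕ} :
    satM .r (MF.diaN (j + 1) (.box .bot)) ↔ j < m := by
  rw [sat_diaN_succ_iff]
  constructor
  · rintro ⟨b, hb, hsat⟩
    rcases Rb_r_iff.1 hb with rfl | ⟨k, rfl⟩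
    · exact absurd hsat (not_satM_t_diaN_box_bot j)
    · have := lt_of_satM_s_diaN_box_bot hsat
      omega
  · intro hj
    exact ⟨.s ⟨m - 1 - j, by omega⟩, Rb_r_iff.2 (.inr ⟨_, rfl⟩),
      satM_s_diaN_box_bot (by simp only; omega)⟩

lemma satM_r_Aform_succ_iff {i : ℕ} : satM .r (Aform (i + 1)) ↔ i + 1 = m := by
  have loop : ∃ u, Rb m .r u ∧ (∃ v, Rb m u v) ∧ ∀ v, Rb m u v → ∃ w, Rb m v w :=
    ⟨.t, Rb_r_iff.2 (.inl rfl), ⟨.t, Rb_t_iff.2 rfl⟩,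
      fun v hv => ⟨.t, by rw [Rb_t_iff.1 hv]; exact Rb_t_iff.2 rfl⟩⟩
  rw [sat_Aform_iff, satM_r_diaN_succ_box_bot_iff, satM_r_diaN_succ_box_bot_iff]
  simp only [loop, and_true]
  omega

end AttachedModel

section CompositeModel

variable {n : ℕ} {S : Type} {R : S → S → Prop} {V : ℕ → S → Prop}

lemma CR_inr_iff {m : Fin (n + 1)} {a : St (m + 1)} {w : CS n S} :
    CR n R V (.inr ⟨m, a⟩) w ↔ ∃ b, w = .inr ⟨m, b⟩ ∧ Rb (m + 1) a b := by
  match w with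
  | .inl _ => simp [CR]
  | .inr ⟨m', b⟩ =>
    constructor
    · rintro ⟨rfl, h⟩
      exact ⟨b, rfl, h⟩
    · rintro ⟨b, hw, h⟩
      cases hw
      exact ⟨rfl, h⟩

lemma sat_CR_inr_iff {m : Fin (n + 1)} {a : St (m + 1)} {ψ : MF} :
    sat (CR n R V) (CV n V) (.inr ⟨m, a⟩) ψ ↔ sat (Rb (m + 1)) (Vempty (m + 1)) a ψ := by
  induction ψ generalizing a with
  | var q => exact Iff.rfl
  | bot => exact Iff.rfl
  | imp φ ψ ihφ ihψ => exact imp_congr ihφ ihψ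
  | box φ ih =>
    simp only [sat, CR_inr_iff]
    exact ⟨fun h b hb => ih.1 (h _ ⟨b, rfl, hb⟩), fun h _ ⟨b, hw, hb⟩ => hw ▸ ih.2 (h b hb)⟩

lemma sat_CR_inl_dia_iff {x : S} {ψ : MF} :
    sat (CR n R V) (CV n V) (.inl x) ψ.dia ↔
      (∃ y, R x y ∧ sat (CR n R V) (CV n V) (.inl y) ψ) ∨
        ∃ m : Fin (n + 1), V m x ∧ sat (CR n R V) (CV n V) (.inr ⟨m, .r⟩) ψ := by
  refine sat_dia_iff.trans ⟨?_, ?_⟩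
  · rintro ⟨y | ⟨m, a⟩, hxy, h⟩
    · exact .inl ⟨y, hxy, h⟩
    · obtain ⟨rfl, hv⟩ := hxy
      exact .inr ⟨m, hv, h⟩
  · rintro (⟨y, hxy, h⟩ | ⟨m, hv, h⟩)
    · exact ⟨.inl y, hxy, h⟩
    · exact ⟨.inr ⟨m, .r⟩, ⟨rfl, hv⟩, h⟩

lemma sat_CR_inl_diaN_box_bot (hV : ∀ x : S, V n x) (y : S) {k : ℕ} (hk : k ≤ n) :
    sat (CR n R V) (CV n V) (.inl y) (MF.diaN (k + 2) (.box .bot)) :=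
  sat_CR_inl_dia_iff.2 <| .inr ⟨Fin.last n, hV y,
    sat_CR_inr_iff.2 (satM_r_diaN_succ_box_bot_iff.2 (by simp only [Fin.val_last]; omega))⟩

end CompositeModel

theorem stmt15_general (n : ℕ) {S : Type} (R : S → S → Prop) (V : ℕ → S → Prop)
    (hV : ∀ x : S, V n x)
    (x : S) (i : Fin (n + 1)) :
    sat (CR n R V) (CV n V) (Sum.inl x) (MF.dia (Aform ((i : ℕ) + 1))) ↔ V i x := by
  have not_from_M : ∀ y, ¬ sat (CR n R V) (CV n V) (.inl y) (Aform (i + 1)) := fun y h =>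
    (sat_Aform_iff.1 h).2.1 (sat_CR_inl_diaN_box_bot hV y (Nat.lt_succ_iff.1 i.isLt))
  simp only [sat_CR_inl_dia_iff, not_from_M, and_false, exists_false, false_or,
    sat_CR_inr_iff, satM_r_Aform_succ_iff, add_left_inj, ← Fin.ext_iff, exists_eq_right']

/-- If p_{n+1} is universally true in M and s_0 ⊨ Θ ∧ φ', then in the
composite model M'': for every state x of M and every i ∈ {1,...,n+1},
M'', x ⊨ ⟨b⟩A_i iff M, x ⊨ p_i. -/
theorem stmt15 (n : ℕ) {S : Type} (R : S → S → Prop) (V : ℕ → S → Prop)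
    (φ : MF) (hφ : varsLt n φ) (hV : ∀ x : S, V n x)
    (s0 : S) (hs0 : sats R V s0 (MFs.and (Theta n) (embed (relT n φ))))
    (x : S) (i : Fin (n + 1)) :
    sat (CR n R V) (CV n V) (Sum.inl x) (MF.dia (Aform ((i : ℕ) + 1))) ↔ V i x :=
  stmt15_general n R V hV x i
end
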